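/- Let X be a set with a binary relation R and an equivalence relation E satisfying right commutativity, and suppose all E-clusters are clean. Then the irreflexive fragment R^{ir} of R also satisfies right commutativity with E. -/

import Mathlib

theorem irreflexive_fragment_right_commutativity {X : Type*} (R E : X → X → Prop)
    (hE : Equivalence E)
    (hRC : ∀ a b c, R a b → E b c → ∃ d, E a d ∧ R d c)
    (hclean : ∀ u v, E u v → R u v → u = v) :
    ∀ a b c, (R a b ∧ a ≠ b) → E b c → ∃ d, E a d ∧ (R d c ∧ d ≠ c) := by
  rintro a b c ⟨hab, hne⟩ hbc
  obtain ⟨d, had, hdc⟩ := hRC a b c hab hbc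
  refine ⟨d, had, hdc, ?_⟩
  rintro rfl
  -- `d = c` would put `a` and `b` in one cluster, which is clean, contradicting `a ≠ b`.
  exact hne (hclean a b (hE.trans had (hE.symm hbc)) hab)
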